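/- Closed graph theorem for bicomplex modules: Let X and Y be F-𝔹ℂ modules and T : X → Y a 𝔹ℂ-linear map whose graph is closed in X × Y. Then T is 𝔻-bounded: there exists α ∈ 𝔻⁺ such that ‖Tx‖_{𝔻,Y} ≤ α‖x‖_{𝔻,X} for all x ∈ X; in particular T is continuous. -/

import Mathlib

noncomputable section

/-- Bicomplex numbers 𝔹ℂ in idempotent coordinates: Z = e₁z₁ + e₂z₂ ↔ (z₁, z₂). -/
abbrev BC := ℂ × ℂ

/-- Hyperbolic numbers 𝔻 in idempotent coordinates: α = α₁e₁ + α₂e₂ ↔ (α₁, α₂). -/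
abbrev Hyp := ℝ × ℝ

/-- Positive hyperbolic numbers 𝔻⁺. -/
def Dpos : Set Hyp := {a | 0 ≤ a.1 ∧ 0 ≤ a.2}

/-- The partial order α ≤ β iff β - α ∈ 𝔻⁺. -/
def dle (a b : Hyp) : Prop := b - a ∈ Dpos

/-- The hyperbolic-valued norm |Z|_k = e₁|z₁| + e₂|z₂| of a bicomplex number. -/
def knorm (z : BC) : Hyp := (‖z.1‖, ‖z.2‖)

/-- The Euclidean modulus of a hyperbolic number α = β₁ + kβ₂, √(β₁² + β₂²),
expressed in idempotent coordinates. -/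
def emod (d : Hyp) : ℝ := Real.sqrt ((d.1 ^ 2 + d.2 ^ 2) / 2)

/-- A hyperbolic-valued norm on a 𝔹ℂ-module X. -/
structure HNorm (X : Type*) [AddCommGroup X] [Module BC X] where
  toFun : X → Hyp
  pos : ∀ x, toFun x ∈ Dpos
  eq_zero_iff : ∀ x, toFun x = 0 ↔ x = 0
  hsmul : ∀ (μ : BC) (x : X), toFun (μ • x) = knorm μ * toFun x
  triangle : ∀ x y, dle (toFun (x + y)) (toFun x + toFun y)

/-- A hyperbolic seminorm on a 𝔹ℂ-module X. -/
structure HSeminorm (X : Type*) [AddCommGroup X] [Module BC X] where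
  toFun : X → Hyp
  pos : ∀ x, toFun x ∈ Dpos
  hsmul : ∀ (μ : BC) (x : X), toFun (μ • x) = knorm μ * toFun x
  triangle : ∀ x y, dle (toFun (x + y)) (toFun x + toFun y)

variable {X : Type*} [AddCommGroup X] [Module BC X]

/-- The real-valued distance induced by a hyperbolic norm. -/
def HNorm.dist (N : HNorm X) (x y : X) : ℝ := emod (N.toFun (x - y))

/-- Convergence of a sequence with respect to a hyperbolic norm. -/
def TendstoH (N : HNorm X) (u : ℕ → X) (l : X) : Prop :=
  ∀ ε > (0 : ℝ), ∃ n₀, ∀ n ≥ n₀, N.dist (u n) l < ε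

/-- Cauchy sequences with respect to a hyperbolic norm. -/
def CauchyH (N : HNorm X) (u : ℕ → X) : Prop :=
  ∀ ε > (0 : ℝ), ∃ n₀, ∀ m ≥ n₀, ∀ n ≥ n₀, N.dist (u m) (u n) < ε

/-- X is an F-𝔹ℂ module: every Cauchy sequence converges. -/
def CompleteH (N : HNorm X) : Prop :=
  ∀ u : ℕ → X, CauchyH N u → ∃ l, TendstoH N u l

/-- The series Σ xₖ converges to s in X. -/
def SumToH (N : HNorm X) (x : ℕ → X) (s : X) : Prop :=
  TendstoH N (fun n => ∑ k ∈ Finset.range n, x k) s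

/-- Convergence of a sequence of hyperbolic numbers. -/
def TendstoD (u : ℕ → Hyp) (l : Hyp) : Prop :=
  ∀ ε > (0 : ℝ), ∃ n₀, ∀ n ≥ n₀, emod (u n - l) < ε

/-- The series Σ dₖ of hyperbolic numbers converges to L. -/
def SumToD (d : ℕ → Hyp) (L : Hyp) : Prop :=
  TendstoD (fun n => ∑ k ∈ Finset.range n, d k) L

/-- Open sets in the topology induced by a hyperbolic norm. -/
def IsOpenH (N : HNorm X) (U : Set X) : Prop :=
  ∀ x ∈ U, ∃ ε > (0 : ℝ), ∀ y, N.dist y x < ε → y ∈ U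

/-- Dense sets in the topology induced by a hyperbolic norm. -/
def DenseH (N : HNorm X) (U : Set X) : Prop :=
  ∀ x : X, ∀ ε > (0 : ℝ), ∃ y ∈ U, N.dist y x < ε

/-- The closure of a set in the topology induced by a hyperbolic norm. -/
def ClosureH (N : HNorm X) (S : Set X) : Set X :=
  {x | ∀ ε > (0 : ℝ), ∃ y ∈ S, N.dist y x < ε}

/-- Continuity of a 𝔻-valued map on X (w.r.t. the hyperbolic-norm topology on X and
the Euclidean topology on 𝔻). -/
def ContinuousHD (N : HNorm X) (p : X → Hyp) : Prop :=
  ∀ x : X, ∀ ε > (0 : ℝ), ∃ δ > (0 : ℝ), ∀ y, N.dist y x < δ → emod (p y - p x) < ε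

/-- A hyperbolic seminorm is countably subadditive if whenever Σ xₖ converges to x in X and
Σ p(xₖ) converges to L in 𝔻, we have p(x) ≤ L. -/
def CountablySubadditive (N : HNorm X) (p : HSeminorm X) : Prop :=
  ∀ (x : ℕ → X) (s : X) (L : Hyp),
    SumToH N x s → SumToD (fun k => p.toFun (x k)) L → dle (p.toFun s) L

section Maps

variable {Y : Type*} [AddCommGroup Y] [Module BC Y]

/-- 𝔹ℂ-linearity of a map between 𝔹ℂ-modules. -/
def IsBCLinear (T : X → Y) : Prop :=
  (∀ x y, T (x + y) = T x + T y) ∧ ∀ (μ : BC) (x : X), T (μ • x) = μ • T x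

/-- Continuity of a map between hyperbolic normed modules. -/
def ContinuousMapH (NX : HNorm X) (NY : HNorm Y) (T : X → Y) : Prop :=
  ∀ x : X, ∀ ε > (0 : ℝ), ∃ δ > (0 : ℝ), ∀ y, NX.dist y x < δ → NY.dist (T y) (T x) < ε

/-- The graph of T is closed: xₙ → x and Txₙ → y imply Tx = y. -/
def ClosedGraphH (NX : HNorm X) (NY : HNorm Y) (T : X → Y) : Prop :=
  ∀ (u : ℕ → X) (x : X) (y : Y),
    TendstoH NX u x → TendstoH NY (fun n => T (u n)) y → T x = y

/-- T is an open map: images of open sets are open. -/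
def IsOpenMapH (NX : HNorm X) (NY : HNorm Y) (T : X → Y) : Prop :=
  ∀ U : Set X, IsOpenH NX U → IsOpenH NY (T '' U)

end Maps


lemma dle_iff (a b : Hyp) : dle a b ↔ a.1 ≤ b.1 ∧ a.2 ≤ b.2 := by
  simp [dle, Dpos, sub_nonneg]

lemma emod_abs (d : Hyp) : emod d = ‖(⟨d.1, d.2⟩ : ℂ)‖ / Real.sqrt 2 := by
  rw [emod, Real.sqrt_div (by positivity), Complex.norm_def, Complex.normSq_mk,
    show d.1 * d.1 + d.2 * d.2 = d.1 ^ 2 + d.2 ^ 2 by ring]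

lemma emod_nonneg (d : Hyp) : 0 ≤ emod d := Real.sqrt_nonneg _

lemma emod_eq_zero {d : Hyp} (h : emod d = 0) : d = 0 := by
  rw [emod_abs, div_eq_zero_iff] at h
  rcases h with h | h
  · have := norm_eq_zero.mp h
    rw [Complex.ext_iff] at this
    exact Prod.ext this.1 this.2
  · exact absurd h (by positivity)

lemma emod_triangle (a b : Hyp) : emod (a + b) ≤ emod a + emod b := by
  rw [emod_abs, emod_abs, emod_abs, ← add_div]
  have hadd : (⟨(a+b).1,(a+b).2⟩:ℂ) = ⟨a.1,a.2⟩ + ⟨b.1,b.2⟩ := by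
    apply Complex.ext <;> simp
  rw [hadd]
  gcongr
  exact norm_add_le _ _

lemma emod_const_mul (c : ℝ) (hc : 0 ≤ c) (d : Hyp) :
    emod (c * d.1, c * d.2) = c * emod d := by
  rw [emod_abs, emod_abs]
  have : (⟨c * d.1, c * d.2⟩ : ℂ) = (c : ℂ) * ⟨d.1, d.2⟩ := by
    apply Complex.ext <;> simp
  rw [this, norm_mul, Complex.norm_real, Real.norm_eq_abs, abs_of_nonneg hc, mul_div_assoc]

lemma emod_mono {a b : Hyp} (h1 : 0 ≤ a.1) (h2 : 0 ≤ a.2)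
    (hb1 : a.1 ≤ b.1) (hb2 : a.2 ≤ b.2) : emod a ≤ emod b := by
  unfold emod; gcongr

lemma emod_e1 (a : ℝ) (ha : 0 ≤ a) : emod (a, 0) = a / Real.sqrt 2 := by
  rw [emod_abs]; simp [Complex.norm_def, Complex.normSq_mk]
  rw [show a*a = a^2 by ring, Real.sqrt_sq ha]

lemma emod_e2 (a : ℝ) (ha : 0 ≤ a) : emod (0, a) = a / Real.sqrt 2 := by
  rw [emod_abs]; simp [Complex.norm_def, Complex.normSq_mk]
  rw [show a*a = a^2 by ring, Real.sqrt_sq ha]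

/-- The real-valued norm `x ↦ emod (N x)` as an `AddGroupNorm`. -/
def hnormAGN {X : Type*} [AddCommGroup X] [Module BC X] (N : HNorm X) : AddGroupNorm X where
  toFun x := emod (N.toFun x)
  map_zero' := by show emod (N.toFun 0) = 0; rw [(N.eq_zero_iff 0).mpr rfl]; simp [emod]
  add_le' x y := by
    show emod (N.toFun (x + y)) ≤ emod (N.toFun x) + emod (N.toFun y)
    refine le_trans ?_ (emod_triangle _ _)
    have ht := (dle_iff _ _).mp (N.triangle x y)
    exact emod_mono (N.pos _).1 (N.pos _).2 ht.1 ht.2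
  neg' x := by
    show emod (N.toFun (-x)) = emod (N.toFun x)
    have h1 : (-x) = (-1 : BC) • x := (neg_one_smul BC x).symm
    rw [h1, N.hsmul]
    have h2 : knorm (-1 : BC) = 1 := by
      simp [knorm, Prod.ext_iff]
    rw [h2, one_mul]
  eq_zero_of_map_eq_zero' x h := (N.eq_zero_iff x).mp (emod_eq_zero h)

/-- Closed graph theorem for bicomplex modules: a 𝔹ℂ-linear map between F-𝔹ℂ modules
with closed graph is 𝔻-bounded, in particular continuous. -/
theorem closed_graph {X Y : Type*} [AddCommGroup X] [Module BC X]
    [AddCommGroup Y] [Module BC Y]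
    (NX : HNorm X) (NY : HNorm Y) (hCX : CompleteH NX) (hCY : CompleteH NY)
    (T : X → Y) (hT : IsBCLinear T) (hG : ClosedGraphH NX NY T) :
    (∃ α ∈ Dpos, ∀ x : X, dle (NY.toFun (T x)) (α * NX.toFun x)) ∧
      ContinuousMapH NX NY T := by
  classical
  letI : Module ℝ X := Module.compHom X (algebraMap ℝ BC)
  letI : Module ℝ Y := Module.compHom Y (algebraMap ℝ BC)
  letI : NormedAddCommGroup X := (hnormAGN NX).toNormedAddCommGroup
  letI : NormedAddCommGroup Y := (hnormAGN NY).toNormedAddCommGroup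
  have hnX : ∀ x : X, ‖x‖ = emod (NX.toFun x) := fun x => rfl
  have hnY : ∀ y : Y, ‖y‖ = emod (NY.toFun y) := fun y => rfl
  have hdX : ∀ a b : X, dist a b = NX.dist a b := fun a b => by
    rw [dist_eq_norm]; rfl
  have hdY : ∀ a b : Y, dist a b = NY.dist a b := fun a b => by
    rw [dist_eq_norm]; rfl
  have hsmulRX : ∀ (r : ℝ) (x : X), r • x = (algebraMap ℝ BC r) • x := fun r x => rfl
  have hsmulRY : ∀ (r : ℝ) (y : Y), r • y = (algebraMap ℝ BC r) • y := fun r y => rfl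
  have hk : ∀ r : ℝ, knorm (algebraMap ℝ BC r) = (|r|, |r|) := by
    intro r; simp [knorm, Prod.ext_iff, Complex.norm_real]
  letI : NormedSpace ℝ X := ⟨fun r x => by
    rw [hsmulRX, hnX, hnX, NX.hsmul, hk]
    have h1 : ((|r|, |r|) : Hyp) * NX.toFun x
        = (|r| * (NX.toFun x).1, |r| * (NX.toFun x).2) := rfl
    rw [h1, emod_const_mul _ (abs_nonneg r), Real.norm_eq_abs]⟩
  letI : NormedSpace ℝ Y := ⟨fun r y => by
    rw [hsmulRY, hnY, hnY, NY.hsmul, hk]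
    have h1 : ((|r|, |r|) : Hyp) * NY.toFun y
        = (|r| * (NY.toFun y).1, |r| * (NY.toFun y).2) := rfl
    rw [h1, emod_const_mul _ (abs_nonneg r), Real.norm_eq_abs]⟩
  haveI : CompleteSpace X := Metric.complete_of_cauchySeq_tendsto (fun u hu => by
    obtain ⟨l, hl⟩ := hCX u (fun ε hε => by
      obtain ⟨n₀, hn⟩ := Metric.cauchySeq_iff.mp hu ε hε
      exact ⟨n₀, fun m hm n hn' => by rw [← hdX]; exact hn m hm n hn'⟩)
    refine ⟨l, Metric.tendsto_atTop.mpr (fun ε hε => ?_)⟩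
    obtain ⟨n₀, h⟩ := hl ε hε
    exact ⟨n₀, fun n hn => by rw [hdX]; exact h n hn⟩)
  haveI : CompleteSpace Y := Metric.complete_of_cauchySeq_tendsto (fun u hu => by
    obtain ⟨l, hl⟩ := hCY u (fun ε hε => by
      obtain ⟨n₀, hn⟩ := Metric.cauchySeq_iff.mp hu ε hε
      exact ⟨n₀, fun m hm n hn' => by rw [← hdY]; exact hn m hm n hn'⟩)
    refine ⟨l, Metric.tendsto_atTop.mpr (fun ε hε => ?_)⟩
    obtain ⟨n₀, h⟩ := hl ε hε
    exact ⟨n₀, fun n hn => by rw [hdY]; exact h n hn⟩)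
  let f : X →ₗ[ℝ] Y :=
    { toFun := T, map_add' := hT.1,
      map_smul' := fun r x => hT.2 (algebraMap ℝ BC r) x }
  have hcont : Continuous f := f.continuous_of_seq_closed_graph (fun u x y hu hTu => by
    have h1 : TendstoH NX u x := fun ε hε => by
      obtain ⟨n₀, h⟩ := Metric.tendsto_atTop.mp hu ε hε
      exact ⟨n₀, fun n hn => by rw [← hdX]; exact h n hn⟩
    have h2 : TendstoH NY (fun n => T (u n)) y := fun ε hε => by
      obtain ⟨n₀, h⟩ := Metric.tendsto_atTop.mp hTu ε hε
      exact ⟨n₀, fun n hn => by rw [← hdY]; exact h n hn⟩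
    exact (hG u x y h1 h2).symm)
  obtain ⟨C, hC, hbC⟩ := SemilinearMapClass.bound_of_continuous f hcont
  have hbC' : ∀ x : X, emod (NY.toFun (T x)) ≤ C * emod (NX.toFun x) := fun x => hbC x
  have hs2 : (0:ℝ) < Real.sqrt 2 := by positivity
  have key : ∀ x : X, (NY.toFun (T x)).1 ≤ C * (NX.toFun x).1
      ∧ (NY.toFun (T x)).2 ≤ C * (NX.toFun x).2 := by
    intro x
    constructor
    · have h := hbC' (((1, 0) : BC) • x)
      rw [hT.2, NY.hsmul, NX.hsmul] at h
      have hk1 : knorm ((1, 0) : BC) = ((1:ℝ), (0:ℝ)) := by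
        simp [knorm, Prod.ext_iff]
      rw [hk1] at h
      have e1 : (((1:ℝ), (0:ℝ)) : Hyp) * NY.toFun (T x) = ((NY.toFun (T x)).1, 0) := by
        simp [Prod.ext_iff]
      have e2 : (((1:ℝ), (0:ℝ)) : Hyp) * NX.toFun x = ((NX.toFun x).1, 0) := by
        simp [Prod.ext_iff]
      rw [e1, e2, emod_e1 _ (NY.pos _).1, emod_e1 _ (NX.pos _).1, ← mul_div_assoc,
        div_le_div_iff₀ hs2 hs2] at h
      exact le_of_mul_le_mul_right h hs2
    · have h := hbC' (((0, 1) : BC) • x)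
      rw [hT.2, NY.hsmul, NX.hsmul] at h
      have hk1 : knorm ((0, 1) : BC) = ((0:ℝ), (1:ℝ)) := by
        simp [knorm, Prod.ext_iff]
      rw [hk1] at h
      have e1 : (((0:ℝ), (1:ℝ)) : Hyp) * NY.toFun (T x) = (0, (NY.toFun (T x)).2) := by
        simp [Prod.ext_iff]
      have e2 : (((0:ℝ), (1:ℝ)) : Hyp) * NX.toFun x = (0, (NX.toFun x).2) := by
        simp [Prod.ext_iff]
      rw [e1, e2, emod_e2 _ (NY.pos _).2, emod_e2 _ (NX.pos _).2, ← mul_div_assoc,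
        div_le_div_iff₀ hs2 hs2] at h
      exact le_of_mul_le_mul_right h hs2
  constructor
  · refine ⟨(C, C), ⟨le_of_lt hC, le_of_lt hC⟩, fun x => ?_⟩
    rw [dle_iff]
    exact ⟨(key x).1, (key x).2⟩
  · intro x ε hε
    refine ⟨ε / C, by positivity, fun y hy => ?_⟩
    have h0 : NY.dist (T y) (T x) = dist (f y) (f x) := (hdY _ _).symm
    rw [h0, dist_eq_norm, ← map_sub]
    calc ‖f (y - x)‖ ≤ C * ‖y - x‖ := hbC _
      _ = C * NX.dist y x := by rw [← dist_eq_norm, hdX]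
      _ < C * (ε / C) := by exact mul_lt_mul_of_pos_left hy hC
      _ = ε := by field_simp
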